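/- arXiv:1507.02018 — 3 statements merged into one kernel-verified Lean document; each statement's English description precedes it below -/
import Mathlib

section
/- Let X be an n×p real matrix and λ ≥ 0. Then the infimum of (1/n)‖X(I − G)‖_F² + λ‖G‖₁ over all p×p matrices G compatible with a DAG equals the infimum of (1/n)‖X(I − P T Pᵀ)‖_F² + λ‖T‖₁ over all pairs (P, T) with P a p×p permutation matrix and T a p×p strictly lower triangular matrix. -/
open Matrix BigOperators

/-- Entrywise Frobenius norm of a real matrix. -/
noncomputable def frob {n p : ℕ} (A : Matrix (Fin n) (Fin p) ℝ) : ℝ :=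
  Real.sqrt (∑ i, ∑ j, (A i j) ^ 2)

/-- Entrywise ℓ1 norm of a real matrix. -/
noncomputable def l1 {n p : ℕ} (A : Matrix (Fin n) (Fin p) ℝ) : ℝ :=
  ∑ i, ∑ j, |A i j|

/-- `P` is a permutation matrix. -/
def IsPermMatrix {p : ℕ} (P : Matrix (Fin p) (Fin p) ℝ) : Prop :=
  ∃ σ : Equiv.Perm (Fin p), ∀ i j, P i j = if i = σ j then 1 else 0

/-- `T` is strictly lower triangular. -/
def StrictLowerTri {p : ℕ} (T : Matrix (Fin p) (Fin p) ℝ) : Prop :=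
  ∀ i j : Fin p, i ≤ j → T i j = 0

/-- The directed graph with an edge `i → j` whenever `G i j ≠ 0` is acyclic
(no directed cycle, self-loops included). -/
def AcyclicMatrix {p : ℕ} (G : Matrix (Fin p) (Fin p) ℝ) : Prop :=
  ∀ i : Fin p, ¬ Relation.TransGen (fun a b : Fin p => G a b ≠ 0) i i
/-!
A matrix is compatible with a DAG exactly when a simultaneous permutation of its rows and
columns, along a topological order of its graph, makes it strictly lower triangular.
Conjugating `T` by a permutation matrix is exactly such a reindexing, and reindexing preserves
the ℓ1 norm, so the two sets of objective values coincide.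
-/

theorem Relation.not_transGen_self_of_lt {α β : Type*} [Preorder β] {r : α → α → Prop}
    (f : α → β) (hf : ∀ a b, r a b → f b < f a) (a : α) : ¬ Relation.TransGen r a a := by
  intro h
  have : Relation.TransGen (· > ·) (f a) (f a) := h.lift f hf
  rw [Relation.transGen_eq_self] at this
  exact lt_irrefl _ this

theorem Relation.exists_equiv_fin_of_not_transGen_self {α : Type*} [Fintype α]
    {r : α → α → Prop} (hr : ∀ a, ¬ Relation.TransGen r a a) {m : ℕ}
    (hm : Fintype.card α = m) : ∃ e : α ≃ Fin m, ∀ a b, r a b → e b < e a := by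
  let _ : PartialOrder α :=
    { le := fun a b => a = b ∨ Relation.TransGen r b a
      le_refl := fun _ => Or.inl rfl
      le_trans := by
        rintro a b c (rfl | hab) (rfl | hbc)
        exacts [Or.inl rfl, Or.inr hbc, Or.inr hab, Or.inr (hbc.trans hab)]
      le_antisymm := by
        rintro a b (rfl | hab) (h | hba)
        exacts [rfl, rfl, h.symm, (hr b (hab.trans hba)).elim] }
  let _ : Fintype (LinearExtension α) := inferInstanceAs (Fintype α)
  let e := monoEquivOfFin (LinearExtension α) hm
  refine ⟨e.symm.toEquiv, fun a b hab => e.symm.strictMono ?_⟩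
  have hne : b ≠ a := by
    rintro rfl
    exact hr b (.single hab)
  exact lt_of_le_of_ne (toLinearExtension.monotone (Or.inr (.single hab) : b ≤ a)) hne

theorem Matrix.mul_mul_transpose_eq_submatrix_of_perm {ι R : Type*} [Fintype ι] [DecidableEq ι]
    [NonAssocSemiring R] (σ : Equiv.Perm ι) {P : Matrix ι ι R}
    (hP : ∀ i j, P i j = if i = σ j then 1 else 0) (T : Matrix ι ι R) :
    P * T * Pᵀ = T.submatrix σ.symm σ.symm := by
  have hPσ : P = σ.symm.toPEquiv.toMatrix := by
    ext i j
    simp only [hP, PEquiv.toMatrix_apply, Equiv.toPEquiv_apply, Option.mem_def, Option.some.injEq,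
      Equiv.symm_apply_eq]
  rw [hPσ, ← PEquiv.toMatrix_symm, ← Equiv.toPEquiv_symm, PEquiv.toMatrix_toPEquiv_mul,
    PEquiv.mul_toMatrix_toPEquiv, Matrix.submatrix_submatrix]
  rfl

theorem l1_submatrix {m n m' n' : ℕ} (A : Matrix (Fin m) (Fin n) ℝ) (e : Fin m' ≃ Fin m)
    (f : Fin n' ≃ Fin n) : l1 (A.submatrix e f) = l1 A := by
  simp only [l1, Matrix.submatrix_apply]
  rw [e.sum_comp (fun i => ∑ j, |A i (f j)|)]
  exact Finset.sum_congr rfl fun i _ => f.sum_comp (fun j => |A i j|)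

theorem StrictLowerTri.acyclicMatrix_submatrix {p : ℕ} {T : Matrix (Fin p) (Fin p) ℝ}
    (hT : StrictLowerTri T) (σ : Equiv.Perm (Fin p)) : AcyclicMatrix (T.submatrix σ σ) :=
  Relation.not_transGen_self_of_lt σ fun _ _ hab => lt_of_not_ge fun h => hab (hT _ _ h)

theorem AcyclicMatrix.exists_strictLowerTri_submatrix {p : ℕ} {G : Matrix (Fin p) (Fin p) ℝ}
    (hG : AcyclicMatrix G) : ∃ σ : Equiv.Perm (Fin p), StrictLowerTri (G.submatrix σ σ) := by
  obtain ⟨e, he⟩ := Relation.exists_equiv_fin_of_not_transGen_self hG (Fintype.card_fin p)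
  refine ⟨e.symm, fun i j hij => ?_⟩
  by_contra h
  exact absurd hij (not_le_of_gt (by simpa using he _ _ h))

theorem stmt_3_general {n p : ℕ} (X : Matrix (Fin n) (Fin p) ℝ) (lam : ℝ) :
    sInf {v : ℝ | ∃ G : Matrix (Fin p) (Fin p) ℝ, AcyclicMatrix G ∧
        v = (1 / (n : ℝ)) * (frob (X * (1 - G))) ^ 2 + lam * l1 G} =
    sInf {v : ℝ | ∃ P T : Matrix (Fin p) (Fin p) ℝ,
        IsPermMatrix P ∧ StrictLowerTri T ∧
        v = (1 / (n : ℝ)) * (frob (X * (1 - P * T * Pᵀ))) ^ 2 + lam * l1 T} := by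
  congr 1
  ext v
  constructor
  · rintro ⟨G, hG, rfl⟩
    obtain ⟨σ, hT⟩ := hG.exists_strictLowerTri_submatrix
    refine ⟨_, _, ⟨σ, fun _ _ => rfl⟩, hT, ?_⟩
    rw [mul_mul_transpose_eq_submatrix_of_perm σ (fun _ _ => rfl), Matrix.submatrix_submatrix,
      σ.self_comp_symm, Matrix.submatrix_id_id, l1_submatrix]
  · rintro ⟨P, T, ⟨σ, hP⟩, hT, rfl⟩
    rw [mul_mul_transpose_eq_submatrix_of_perm σ hP]
    exact ⟨_, hT.acyclicMatrix_submatrix σ.symm, by rw [l1_submatrix]⟩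

theorem stmt_3 {n p : ℕ} (X : Matrix (Fin n) (Fin p) ℝ) (lam : ℝ) (hlam : 0 ≤ lam) :
    sInf {v : ℝ | ∃ G : Matrix (Fin p) (Fin p) ℝ, AcyclicMatrix G ∧
        v = (1 / (n : ℝ)) * (frob (X * (1 - G))) ^ 2 + lam * l1 G} =
    sInf {v : ℝ | ∃ P T : Matrix (Fin p) (Fin p) ℝ,
        IsPermMatrix P ∧ StrictLowerTri T ∧
        v = (1 / (n : ℝ)) * (frob (X * (1 - P * T * Pᵀ))) ^ 2 + lam * l1 T} :=
  stmt_3_general X lam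
end

section
/- (Cone condition.) Let X, ε be n×p real matrices (n ≥ 1) and G₀ a p×p real matrix with X = X G₀ + ε, and let S ⊆ {1,…,p}² contain the support of G₀ (i.e. (G₀)_{ij} = 0 for (i,j) ∉ S). Let λ > 0, let 𝒢 be a set of p×p matrices containing G₀, and suppose Ĝ ∈ 𝒢 minimizes G ↦ (1/n)‖X(I − G)‖_F² + λ‖G‖₁ over 𝒢. Set Δ = Ĝ − G₀ and assume the cross-term bound (2/n)·|trace(εᵀ X Δ)| ≤ (λ/2)‖Δ‖₁. Then Δ lies in the cone: ‖Δ_{S^C}‖₁ ≤ 3‖Δ_S‖₁. -/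
open Matrix BigOperators

/-- The matrix equal to `M` on the entries indexed by `S` and zero elsewhere. -/
def restrictTo {p : ℕ} (S : Finset (Fin p × Fin p)) (M : Matrix (Fin p) (Fin p) ℝ) :
    Matrix (Fin p) (Fin p) ℝ :=
  fun i j => if (i, j) ∈ S then M i j else 0

/-!
Comparing the objective at `Ĝ` with its value at `G₀` and expanding the square gives the basic
inequality `λ (‖Ĝ‖₁ - ‖G₀‖₁) ≤ (2/n) tr(εᵀ X Δ) ≤ (λ/2) ‖Δ‖₁`. Since `G₀` vanishes off `S`,
the triangle inequality on `S` gives `‖G₀‖₁ - ‖Ĝ‖₁ ≤ ‖Δ_S‖₁ - ‖Δ_{S^C}‖₁`; together with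
`‖Δ‖₁ = ‖Δ_S‖₁ + ‖Δ_{S^C}‖₁` this yields `‖Δ_{S^C}‖₁ ≤ 3 ‖Δ_S‖₁`.
-/

section Frobenius

variable {m n : ℕ}

lemma frob_sq (A : Matrix (Fin m) (Fin n) ℝ) : frob A ^ 2 = ∑ i, ∑ j, A i j ^ 2 :=
  Real.sq_sqrt (by positivity)

lemma trace_transpose_mul_eq_sum (A B : Matrix (Fin m) (Fin n) ℝ) :
    trace (Aᵀ * B) = ∑ i, ∑ j, A i j * B i j := by
  simp only [trace, diag, mul_apply, transpose_apply]
  exact Finset.sum_comm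

lemma frob_sub_sq (A B : Matrix (Fin m) (Fin n) ℝ) :
    frob (A - B) ^ 2 = frob A ^ 2 - 2 * trace (Aᵀ * B) + frob B ^ 2 := by
  simp only [frob_sq, trace_transpose_mul_eq_sum, Matrix.sub_apply, Finset.mul_sum,
    ← Finset.sum_sub_distrib, ← Finset.sum_add_distrib]
  congr! 2 with i - j -
  ring

end Frobenius

section L1

variable {p : ℕ}

lemma restrictTo_apply (S : Finset (Fin p × Fin p)) (M : Matrix (Fin p) (Fin p) ℝ) (i j : Fin p) :
    restrictTo S M i j = if (i, j) ∈ S then M i j else 0 :=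
  rfl

lemma l1_eq_l1_restrictTo_add (S : Finset (Fin p × Fin p)) (M : Matrix (Fin p) (Fin p) ℝ) :
    l1 M = l1 (restrictTo S M) + l1 (M - restrictTo S M) := by
  simp only [l1, restrictTo_apply, Matrix.sub_apply, ← Finset.sum_add_distrib]
  congr! 2 with i - j -
  split_ifs <;> simp

lemma l1_sub_l1_le_of_support {S : Finset (Fin p × Fin p)} {G₀ : Matrix (Fin p) (Fin p) ℝ}
    (hsupp : ∀ i j, (i, j) ∉ S → G₀ i j = 0) (G : Matrix (Fin p) (Fin p) ℝ) :
    l1 G₀ - l1 G ≤ l1 (restrictTo S (G - G₀)) - l1 ((G - G₀) - restrictTo S (G - G₀)) := by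
  simp only [l1, restrictTo_apply, Matrix.sub_apply, ← Finset.sum_sub_distrib]
  refine Finset.sum_le_sum fun i _ => Finset.sum_le_sum fun j _ => ?_
  by_cases h : (i, j) ∈ S
  · simpa [h, abs_sub_comm] using abs_sub_abs_le_abs_sub (G₀ i j) (G i j)
  · simp [h, hsupp i j h]

end L1

lemma lasso_basic_inequality {n p : ℕ} {X eps : Matrix (Fin n) (Fin p) ℝ}
    {G₀ G : Matrix (Fin p) (Fin p) ℝ} (hmodel : X = X * G₀ + eps) {lam : ℝ}
    (hle : (1 / (n : ℝ)) * frob (X * (1 - G)) ^ 2 + lam * l1 G ≤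
      (1 / (n : ℝ)) * frob (X * (1 - G₀)) ^ 2 + lam * l1 G₀) :
    lam * (l1 G - l1 G₀) ≤ (2 / (n : ℝ)) * trace (epsᵀ * (X * (G - G₀))) := by
  have hres₀ : X * (1 - G₀) = eps := by
    rw [Matrix.mul_sub, Matrix.mul_one]
    nth_rewrite 1 [hmodel]
    abel
  have hres : X * (1 - G) = eps - X * (G - G₀) := by
    rw [Matrix.mul_sub, Matrix.mul_one, Matrix.mul_sub]
    nth_rewrite 1 [hmodel]
    abel
  rw [hres₀, hres, frob_sub_sq] at hle
  have hfit : 0 ≤ (1 / (n : ℝ)) * frob (X * (G - G₀)) ^ 2 := by positivity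
  linear_combination hle + hfit

theorem stmt_14_general {n p : ℕ} (X eps : Matrix (Fin n) (Fin p) ℝ)
    (G₀ : Matrix (Fin p) (Fin p) ℝ) (hmodel : X = X * G₀ + eps)
    (S : Finset (Fin p × Fin p)) (hsupp : ∀ i j : Fin p, (i, j) ∉ S → G₀ i j = 0)
    (lam : ℝ) (hlam : 0 < lam)
    (𝒢 : Set (Matrix (Fin p) (Fin p) ℝ)) (hG₀ : G₀ ∈ 𝒢)
    (Ghat : Matrix (Fin p) (Fin p) ℝ)
    (hmin : ∀ G ∈ 𝒢,
      (1 / (n : ℝ)) * (frob (X * (1 - Ghat))) ^ 2 + lam * l1 Ghat ≤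
        (1 / (n : ℝ)) * (frob (X * (1 - G))) ^ 2 + lam * l1 G)
    (hcross : (2 / (n : ℝ)) * |Matrix.trace (epsᵀ * (X * (Ghat - G₀)))| ≤
      (lam / 2) * l1 (Ghat - G₀)) :
    l1 ((Ghat - G₀) - restrictTo S (Ghat - G₀)) ≤ 3 * l1 (restrictTo S (Ghat - G₀)) := by
  have hbasic := lasso_basic_inequality hmodel (hmin G₀ hG₀)
  have hcross' : (2 / (n : ℝ)) * trace (epsᵀ * (X * (Ghat - G₀))) ≤ lam / 2 * l1 (Ghat - G₀) :=
    (mul_le_mul_of_nonneg_left (le_abs_self _) (by positivity)).trans hcross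
  have hdecomp := mul_le_mul_of_nonneg_left (l1_sub_l1_le_of_support hsupp Ghat) hlam.le
  rw [l1_eq_l1_restrictTo_add S (Ghat - G₀)] at hcross'
  refine le_of_mul_le_mul_left ?_ hlam
  linarith

theorem stmt_14 {n p : ℕ} (hn : 1 ≤ n) (X eps : Matrix (Fin n) (Fin p) ℝ)
    (G₀ : Matrix (Fin p) (Fin p) ℝ) (hmodel : X = X * G₀ + eps)
    (S : Finset (Fin p × Fin p)) (hsupp : ∀ i j : Fin p, (i, j) ∉ S → G₀ i j = 0)
    (lam : ℝ) (hlam : 0 < lam)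
    (𝒢 : Set (Matrix (Fin p) (Fin p) ℝ)) (hG₀ : G₀ ∈ 𝒢)
    (Ghat : Matrix (Fin p) (Fin p) ℝ) (hGhat : Ghat ∈ 𝒢)
    (hmin : ∀ G ∈ 𝒢,
      (1 / (n : ℝ)) * (frob (X * (1 - Ghat))) ^ 2 + lam * l1 Ghat ≤
        (1 / (n : ℝ)) * (frob (X * (1 - G))) ^ 2 + lam * l1 G)
    (hcross : (2 / (n : ℝ)) * |Matrix.trace (epsᵀ * (X * (Ghat - G₀)))| ≤
      (lam / 2) * l1 (Ghat - G₀)) :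
    l1 ((Ghat - G₀) - restrictTo S (Ghat - G₀)) ≤ 3 * l1 (restrictTo S (Ghat - G₀)) :=
  stmt_14_general X eps G₀ hmodel S hsupp lam hlam 𝒢 hG₀ Ghat hmin hcross
end

section
/- (Minimal eigenvalue bound.) Let p ≥ 1, let G be a p×p real matrix compatible with a DAG such that |G_{ij}| ≤ g_max for all i,j and G has at most s² nonzero entries for some integer s with 1 ≤ s ≤ p. Let Σ be a symmetric positive definite p×p real matrix with Σ⁻¹ = (I − G)(I − G)ᵀ. Then every eigenvalue of Σ is at least 1 / (p · max(1, g_max²) · (1 + s)); in particular the minimal eigenvalue λ_min of Σ satisfies λ_min ≥ 1 / (p · max(1, g_max²) · (1 + s)). -/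
open Matrix BigOperators

/-!
The inverse of the eigenvalue `μ` is a Rayleigh quotient of `Σ⁻¹ = A Aᵀ` with `A = 1 - G`:
`μ⁻¹ ‖v‖² = ‖Aᵀ v‖²`, and by Cauchy–Schwarz this is at most the squared Frobenius norm of `A`
times `‖v‖²`. Acyclicity forces a zero diagonal, so `‖1 - G‖²_F = p + ‖G‖²_F`, and sparsity with
the entry bound gives `‖G‖²_F ≤ s² g_max² ≤ p s max(1, g_max²)`.
-/

theorem AcyclicMatrix.diag_eq_zero {p : ℕ} {G : Matrix (Fin p) (Fin p) ℝ} (hG : AcyclicMatrix G)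
    (i : Fin p) : G i i = 0 :=
  not_not.mp fun h => hG i (Relation.TransGen.single h)

namespace Matrix

variable {m n : Type*} [Fintype m] [Fintype n]

theorem sum_sq_transpose (A : Matrix m n ℝ) :
    ∑ i, ∑ j, Aᵀ i j ^ 2 = ∑ i, ∑ j, A i j ^ 2 :=
  Finset.sum_comm

theorem sum_sq_le_ncard_support_mul_sq (A : Matrix m n ℝ) {b : ℝ} (hb : ∀ i j, |A i j| ≤ b) :
    ∑ i, ∑ j, A i j ^ 2 ≤ Set.ncard {ij : m × n | A ij.1 ij.2 ≠ 0} * b ^ 2 := by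
  classical
  rw [← Finset.sum_product', Finset.univ_product_univ, ← Finset.sum_filter_ne_zero,
    Set.ncard_eq_toFinset_card', Set.toFinset_ofPred]
  simp only [ne_eq, pow_eq_zero_iff two_ne_zero]
  refine (Finset.sum_le_card_nsmul _ _ _ fun ij _ => ?_).trans_eq (nsmul_eq_mul _ _)
  exact sq_le_sq' (neg_le_of_abs_le (hb _ _)) (le_of_abs_le (hb _ _))

theorem sum_sq_one_sub_of_diag_eq_zero [DecidableEq n] {G : Matrix n n ℝ} (hG : ∀ i, G i i = 0) :
    ∑ i, ∑ j, (1 - G) i j ^ 2 = Fintype.card n + ∑ i, ∑ j, G i j ^ 2 := by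
  have hentry : ∀ i j, (1 - G) i j ^ 2 = (1 : Matrix n n ℝ) i j + G i j ^ 2 := by
    intro i j
    rcases eq_or_ne i j with rfl | hij
    · simp [hG]
    · simp [one_apply_ne hij]
  simp only [hentry, Finset.sum_add_distrib]
  simp [one_apply]

theorem mulVec_dotProduct_mulVec_self_le (A : Matrix m n ℝ) (v : n → ℝ) :
    A *ᵥ v ⬝ᵥ A *ᵥ v ≤ (∑ i, ∑ j, A i j ^ 2) * (v ⬝ᵥ v) := by
  simp only [dotProduct, mulVec, ← sq]
  rw [Finset.sum_mul]
  exact Finset.sum_le_sum fun i _ => Finset.sum_mul_sq_le_sq_mul_sq _ _ _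

theorem inv_mulVec_eq_inv_smul [DecidableEq n] {A : Matrix n n ℝ} (hA : IsUnit A.det) {μ : ℝ}
    (hμ : μ ≠ 0) {v : n → ℝ} (hv : A *ᵥ v = μ • v) : A⁻¹ *ᵥ v = μ⁻¹ • v := by
  rw [eq_inv_smul_iff₀ hμ, ← mulVec_smul, ← hv, mulVec_mulVec, nonsing_inv_mul _ hA, one_mulVec]

theorem PosDef.eigenvalue_pos {A : Matrix n n ℝ} (hA : A.PosDef) {μ : ℝ} {v : n → ℝ} (hv0 : v ≠ 0)
    (hv : A *ᵥ v = μ • v) : 0 < μ := by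
  have h := hA.dotProduct_mulVec_pos hv0
  rw [star_trivial, hv, dotProduct_smul, smul_eq_mul] at h
  exact pos_of_mul_pos_left h (dotProduct_self_star_nonneg v)

theorem PosDef.inv_eigenvalue_le_sum_sq [DecidableEq n] {Cov A : Matrix n n ℝ} (hCov : Cov.PosDef)
    (hinv : Cov⁻¹ = A * Aᵀ) {μ : ℝ} {v : n → ℝ} (hv0 : v ≠ 0) (hv : Cov *ᵥ v = μ • v) :
    μ⁻¹ ≤ ∑ i, ∑ j, A i j ^ 2 := by
  have hμ := hCov.eigenvalue_pos hv0 hv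
  have hvv : 0 < v ⬝ᵥ v := by simpa using dotProduct_self_star_pos_iff.mpr hv0
  have hrayleigh : μ⁻¹ * (v ⬝ᵥ v) = Aᵀ *ᵥ v ⬝ᵥ Aᵀ *ᵥ v := by
    rw [← smul_eq_mul, ← smul_dotProduct,
      ← inv_mulVec_eq_inv_smul hCov.det_pos.ne'.isUnit hμ.ne' hv, hinv,
      ← mulVec_mulVec, dotProduct_comm, dotProduct_mulVec, ← mulVec_transpose]
  refine le_of_mul_le_mul_right ?_ hvv
  rw [hrayleigh, ← sum_sq_transpose A]
  exact mulVec_dotProduct_mulVec_self_le _ _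

end Matrix

theorem add_sq_mul_sq_le_mul_max_mul_one_add {p s g : ℝ} (hs : 0 ≤ s) (hsp : s ≤ p) :
    p + s ^ 2 * g ^ 2 ≤ p * max 1 (g ^ 2) * (1 + s) := by
  have h1 : p ≤ p * max 1 (g ^ 2) := le_mul_of_one_le_right (hs.trans hsp) (le_max_left _ _)
  have h2 : s ^ 2 * g ^ 2 ≤ p * s * max 1 (g ^ 2) :=
    mul_le_mul (by nlinarith) (le_max_right _ _) (sq_nonneg _) (mul_nonneg (hs.trans hsp) hs)
  linarith

theorem stmt_17_general {p : ℕ} (G : Matrix (Fin p) (Fin p) ℝ)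
    (hG : AcyclicMatrix G)
    (gmax : ℝ) (hbound : ∀ i j : Fin p, |G i j| ≤ gmax)
    (s : ℕ) (hsp : s ≤ p)
    (hsparse : Set.ncard {ij : Fin p × Fin p | G ij.1 ij.2 ≠ 0} ≤ s ^ 2)
    (Cov : Matrix (Fin p) (Fin p) ℝ) (hCov : Cov.PosDef)
    (hinv : Cov⁻¹ = (1 - G) * (1 - G)ᵀ) :
    ∀ μ : ℝ, (∃ v : Fin p → ℝ, v ≠ 0 ∧ Cov.mulVec v = μ • v) →
      1 / ((p : ℝ) * max 1 (gmax ^ 2) * (1 + (s : ℝ))) ≤ μ := by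
  rintro μ ⟨v, hv0, hv⟩
  have hGfrob : ∑ i, ∑ j, G i j ^ 2 ≤ (s : ℝ) ^ 2 * gmax ^ 2 :=
    (G.sum_sq_le_ncard_support_mul_sq hbound).trans <|
      mul_le_mul_of_nonneg_right (by exact_mod_cast hsparse) (sq_nonneg _)
  have hμinv : μ⁻¹ ≤ (p : ℝ) * max 1 (gmax ^ 2) * (1 + (s : ℝ)) :=
    calc μ⁻¹ ≤ ∑ i, ∑ j, (1 - G) i j ^ 2 := hCov.inv_eigenvalue_le_sum_sq hinv hv0 hv
      _ = p + ∑ i, ∑ j, G i j ^ 2 := by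
        rw [sum_sq_one_sub_of_diag_eq_zero hG.diag_eq_zero, Fintype.card_fin]
      _ ≤ p + (s : ℝ) ^ 2 * gmax ^ 2 := by gcongr
      _ ≤ _ := add_sq_mul_sq_le_mul_max_mul_one_add s.cast_nonneg (by exact_mod_cast hsp)
  rw [one_div]
  exact inv_le_of_inv_le₀ (hCov.eigenvalue_pos hv0 hv) hμinv

theorem stmt_17 {p : ℕ} (hp : 1 ≤ p) (G : Matrix (Fin p) (Fin p) ℝ)
    (hG : AcyclicMatrix G)
    (gmax : ℝ) (hbound : ∀ i j : Fin p, |G i j| ≤ gmax)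
    (s : ℕ) (hs1 : 1 ≤ s) (hsp : s ≤ p)
    (hsparse : Set.ncard {ij : Fin p × Fin p | G ij.1 ij.2 ≠ 0} ≤ s ^ 2)
    (Cov : Matrix (Fin p) (Fin p) ℝ) (hCov : Cov.PosDef)
    (hinv : Cov⁻¹ = (1 - G) * (1 - G)ᵀ) :
    ∀ μ : ℝ, (∃ v : Fin p → ℝ, v ≠ 0 ∧ Cov.mulVec v = μ • v) →
      1 / ((p : ℝ) * max 1 (gmax ^ 2) * (1 + (s : ℝ))) ≤ μ :=
  stmt_17_general G hG gmax hbound s hsp hsparse Cov hCov hinv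
end
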